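/- Let A ∈ ℝ^{n×n} and let Ū ∈ ℝ^{n×r} have orthonormal columns spanning an A-invariant subspace (i.e. (I_n − ŪŪ⊤) A Ū = 0). If A_Ū := Ū⊤AŪ is invertible, then Ū is a fixed point of one step of the natural power method, U ↦ AU(U⊤A⊤AU)^{-1/2}, if and only if A_Ū is symmetric positive definite (equivalently A_Ū = (A_Ū⊤ A_Ū)^{1/2}). -/

import Mathlib

/-!
Invariance gives `A Ū = Ū A_Ū`, so `Ūᵀ Aᵀ A Ū = A_Ūᵀ A_Ū` and one power step sends `Ū` to
`Ū A_Ū |A_Ū|⁻¹`, where `|B| = (Bᵀ B)^{1/2}`. Since `Ū` has a left inverse, `Ū` is fixed iff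
`A_Ū = |A_Ū|`, i.e. iff `A_Ū` is positive semidefinite; invertibility makes it definite.
-/

open Matrix

open Classical in
noncomputable def invSqrt {r : ℕ} (M : Matrix (Fin r) (Fin r) ℝ) :
    Matrix (Fin r) (Fin r) ℝ :=
  if h : M.PosSemidef then ((h.1.eigenvectorUnitary : Matrix (Fin r) (Fin r) ℝ) *
    diagonal ((↑) ∘ (√·) ∘ h.1.eigenvalues) *
    (star h.1.eigenvectorUnitary : Matrix (Fin r) (Fin r) ℝ))⁻¹ else 0

open scoped MatrixOrder

lemma CFC.abs_eq_self_iff {A : Type*} [NonUnitalRing A] [StarRing A] [TopologicalSpace A]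
    [Module ℝ A] [SMulCommClass ℝ A A] [IsScalarTower ℝ A A]
    [NonUnitalContinuousFunctionalCalculus ℝ A IsSelfAdjoint]
    [PartialOrder A] [StarOrderedRing A] [NonnegSpectrumClass ℝ A]
    [IsTopologicalRing A] [T2Space A] (a : A) :
    CFC.abs a = a ↔ 0 ≤ a :=
  ⟨fun h => h ▸ CFC.abs_nonneg a, fun h => CFC.abs_of_nonneg a h⟩

namespace Matrix

variable {m n α : Type*} [Fintype m] [Fintype n] [DecidableEq n] [CommRing α]

lemma mul_eq_left_iff_of_mul_eq_one {V : Matrix n m α} {U : Matrix m n α} (hVU : V * U = 1)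
    {X : Matrix n n α} : U * X = U ↔ X = 1 :=
  ⟨fun h => by simpa [← Matrix.mul_assoc, hVU] using congrArg (V * ·) h,
    fun h => h ▸ Matrix.mul_one U⟩

lemma mul_nonsing_inv_eq_one_iff {A B : Matrix n n α} (hA : IsUnit A.det) :
    A * B⁻¹ = 1 ↔ A = B := by
  refine ⟨fun h => ?_, fun h => h ▸ mul_nonsing_inv A hA⟩
  have hB : IsUnit B.det :=
    isUnit_nonsing_inv_det_iff.mp ((inv_eq_right_inv h).symm ▸ isUnit_nonsing_inv_det A hA)
  calc A = A * B⁻¹ * B := (nonsing_inv_mul_cancel_right B A hB).symm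
    _ = B := by rw [h, Matrix.one_mul]

end Matrix

lemma invSqrt_eq_inv_sqrt {r : ℕ} {M : Matrix (Fin r) (Fin r) ℝ} (hM : M.PosSemidef) :
    invSqrt M = (CFC.sqrt M)⁻¹ := by
  rw [invSqrt, dif_pos hM, CFC.sqrt_eq_real_sqrt _ hM.nonneg,
    cfcₙ_eq_cfc (hf := Real.continuous_sqrt.continuousOn) (hf0 := Real.sqrt_zero),
    hM.1.cfc_eq, IsHermitian.cfc, Unitary.conjStarAlgAut_apply]
  rfl

/-- A basis `Ū` of an `A`-invariant subspace with invertible compression `A_Ū`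
is a fixed point of the natural power method step iff `A_Ū` is symmetric
positive definite. -/
theorem stmt_6 {n r : ℕ} (A : Matrix (Fin n) (Fin n) ℝ)
    (U : Matrix (Fin n) (Fin r) ℝ) (hUorth : Uᵀ * U = 1)
    (hinv : (1 - U * Uᵀ) * A * U = 0)
    (hAU : IsUnit (Uᵀ * A * U).det) :
    A * U * invSqrt (Uᵀ * Aᵀ * A * U) = U ↔ (Uᵀ * A * U).PosDef := by
  set B := Uᵀ * A * U
  have hAU_eq : A * U = U * B := by
    rw [← sub_eq_zero, ← hinv]
    simp only [B, Matrix.sub_mul, Matrix.one_mul, Matrix.mul_assoc]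
  have hgram : Uᵀ * Aᵀ * A * U = star B * B :=
    calc Uᵀ * Aᵀ * A * U = (A * U)ᵀ * (A * U) := by simp only [transpose_mul, Matrix.mul_assoc]
      _ = Bᵀ * (Uᵀ * U) * B := by simp only [hAU_eq, transpose_mul, Matrix.mul_assoc]
      _ = star B * B := by
        rw [hUorth, Matrix.mul_one, star_eq_conjTranspose, conjTranspose_eq_transpose_of_trivial]
  have hB : B.PosSemidef ↔ B.PosDef :=
    ⟨fun h => h.posDef_iff_isUnit.mpr ((isUnit_iff_isUnit_det B).mpr hAU), PosDef.posSemidef⟩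
  rw [hgram, invSqrt_eq_inv_sqrt (star_mul_self_nonneg B).posSemidef, ← CFC.abs, hAU_eq,
    Matrix.mul_assoc, mul_eq_left_iff_of_mul_eq_one hUorth, mul_nonsing_inv_eq_one_iff hAU,
    eq_comm, CFC.abs_eq_self_iff, nonneg_iff_posSemidef, hB]
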